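/- arXiv:1202.5442 — 5 statements merged into one kernel-verified Lean document; each statement's English description precedes it below -/
import Mathlib

section
/- Let Ω be a properly convex open set, and let (x_n), (y_n) be sequences in Ω such that x_n converges to an extremal point x_∞ ∈ ∂Ω and the Hilbert distances d_Ω(x_n, y_n) are bounded. Then y_n also converges to x_∞. -/
open Set Filter MeasureTheory

/-- The Funk (asymmetric) distance of a convex set `S` in a real vector space,
expressed through the Minkowski gauge: `F(x,y) = - log (1 - gauge_{S-x}(y-x))`. -/
noncomputable def funkDist {E : Type*} [AddCommGroup E] [Module ℝ E] (S : Set E) (x y : E) : ℝ :=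
  - Real.log (1 - gauge ((fun z => z - x) '' S) (y - x))

/-- The Hilbert (cross-ratio) distance of a convex set `S`:
`d_S(x,y) = (1/2) log ([p:x:y:q])`, the symmetrization of the Funk distance. -/
noncomputable def hilbertDist {E : Type*} [AddCommGroup E] [Module ℝ E] (S : Set E) (x y : E) : ℝ :=
  (funkDist S x y + funkDist S y x) / 2

/-- A properly convex open subset of `P^n`, viewed in an affine chart:
a nonempty bounded convex open subset of `ℝ^n`. -/
def IsProperlyConvex {E : Type*} [NormedAddCommGroup E] [NormedSpace ℝ E] (S : Set E) : Prop :=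
  IsOpen S ∧ Convex ℝ S ∧ Bornology.IsBounded S ∧ S.Nonempty

/-- The open metric ball of the Hilbert metric of `S`. -/
noncomputable def hilbertBall {E : Type*} [AddCommGroup E] [Module ℝ E]
    (S : Set E) (x : E) (r : ℝ) : Set E :=
  {y ∈ S | hilbertDist S x y < r}

/-- `p` is an extremal point of `∂S`: it is not in the interior of any nontrivial segment
contained in `∂S`. -/
def IsExtremalPoint {E : Type*} [NormedAddCommGroup E] [NormedSpace ℝ E]
    (S : Set E) (p : E) : Prop :=
  p ∈ frontier S ∧ ∀ a ∈ frontier S, ∀ b ∈ frontier S, p ∈ openSegment ℝ a b → a = b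

/-- The unit ball `B(T_xΩ)` of the Finsler norm
`F(x,v) = (|v|/2) (1/|x x⁻| + 1/|x x⁺|) = (gauge_{S-x}(v) + gauge_{S-x}(-v))/2`
of the Hilbert metric of `S` at the point `x`. -/
noncomputable def finslerBall {E : Type*} [AddCommGroup E] [Module ℝ E]
    (S : Set E) (x : E) : Set E :=
  {v | gauge ((fun z => z - x) '' S) v + gauge ((fun z => z - x) '' S) (-v) < 2}

section Aux

variable {E : Type*} [NormedAddCommGroup E] [NormedSpace ℝ E] {Ω : Set E}

lemma aux_isOpen_img (hop : IsOpen Ω) (y : E) : IsOpen ((fun z => z - y) '' Ω) := by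
  have : (fun z : E => z - y) '' Ω = (fun z => z + (-y)) '' Ω := by
    simp [sub_eq_add_neg]
  rw [this]
  exact (isOpenMap_add_right (-y)) Ω hop

lemma aux_convex_img (hconv : Convex ℝ Ω) (y : E) : Convex ℝ ((fun z => z - y) '' Ω) := by
  have : (fun z : E => z - y) '' Ω = (fun z => (-y) + z) '' Ω := by
    simp [sub_eq_neg_add]
  rw [this]
  exact hconv.translate (-y)

lemma aux_zero_mem_img {y : E} (hy : y ∈ Ω) : (0 : E) ∈ (fun z => z - y) '' Ω :=
  ⟨y, hy, sub_self y⟩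

lemma aux_gauge_lt_one (hop : IsOpen Ω) {x y : E} (hx : x ∈ Ω) :
    gauge ((fun z => z - y) '' Ω) (x - y) < 1 :=
  gauge_lt_one_of_mem_of_isOpen (aux_isOpen_img hop y) ⟨x, hx, rfl⟩

lemma aux_funk_nonneg (hop : IsOpen Ω) {x y : E} (hx : x ∈ Ω) (hy : y ∈ Ω) :
    0 ≤ funkDist Ω x y := by
  have h1 : gauge ((fun z => z - x) '' Ω) (y - x) < 1 := aux_gauge_lt_one hop hy
  have h0 : 0 ≤ gauge ((fun z => z - x) '' Ω) (y - x) := gauge_nonneg _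
  have : Real.log (1 - gauge ((fun z => z - x) '' Ω) (y - x)) ≤ 0 :=
    Real.log_nonpos (by linarith) (by linarith)
  simp only [funkDist]; linarith

lemma aux_gauge_le_of_funk_le (hop : IsOpen Ω) {x y : E} (hx : x ∈ Ω) {B : ℝ}
    (h : funkDist Ω y x ≤ B) :
    gauge ((fun z => z - y) '' Ω) (x - y) ≤ 1 - Real.exp (-B) := by
  set g := gauge ((fun z => z - y) '' Ω) (x - y) with hg
  have h1 : g < 1 := aux_gauge_lt_one hop hx
  have hpos : 0 < 1 - g := by linarith
  have hlog : -B ≤ Real.log (1 - g) := by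
    simp only [funkDist, ← hg] at h; linarith
  have := (Real.le_log_iff_exp_le hpos).mp hlog
  linarith

lemma aux_exists_combo (hop : IsOpen Ω) (hconv : Convex ℝ Ω) {x y : E}
    (hy : y ∈ Ω) {μ : ℝ} (hμ0 : 0 < μ)
    (hgauge : gauge ((fun z => z - y) '' Ω) (x - y) < μ) :
    ∃ z ∈ Ω, x = (1 - μ) • y + μ • z := by
  set S := (fun z : E => z - y) '' Ω with hS
  have hSop : IsOpen S := aux_isOpen_img hop y
  have hSconv : Convex ℝ S := aux_convex_img hconv y
  have hS0 : (0 : E) ∈ S := aux_zero_mem_img hy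
  have hlt : gauge S (μ⁻¹ • (x - y)) < 1 := by
    rw [gauge_smul_of_nonneg (inv_nonneg.2 hμ0.le), smul_eq_mul, inv_mul_eq_div]
    exact (div_lt_one hμ0).mpr hgauge
  have hmem : μ⁻¹ • (x - y) ∈ S := by
    rw [← gauge_lt_one_eq_self_of_isOpen hSconv hS0 hSop]
    exact hlt
  obtain ⟨z, hz, hzeq⟩ := hmem
  refine ⟨z, hz, ?_⟩
  have hzeq' : z - y = μ⁻¹ • (x - y) := hzeq
  have hxyz : μ • (z - y) = x - y := by
    rw [hzeq', smul_inv_smul₀ hμ0.ne']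
  have : (1 - μ) • y + μ • z = y + μ • (z - y) := by
    rw [sub_smul, one_smul, smul_sub]; abel
  rw [this, hxyz]; abel

end Aux

/-- If `(x_k)` converges to an extremal boundary point `x∞` of a properly convex open set `Ω`
and the Hilbert distances `d_Ω(x_k, y_k)` stay bounded, then `(y_k)` converges to `x∞`. -/
theorem tendsto_of_bounded_hilbertDist (n : ℕ) (Ω : Set (EuclideanSpace ℝ (Fin n)))
    (hΩ : IsProperlyConvex Ω) (x y : ℕ → EuclideanSpace ℝ (Fin n))
    (hx : ∀ k, x k ∈ Ω) (hy : ∀ k, y k ∈ Ω)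
    (xinf : EuclideanSpace ℝ (Fin n)) (hlim : Tendsto x atTop (nhds xinf))
    (hext : IsExtremalPoint Ω xinf)
    (hbdd : ∃ C : ℝ, ∀ k, hilbertDist Ω (x k) (y k) ≤ C) :
    Tendsto y atTop (nhds xinf) := by
  obtain ⟨hop, hconv, hbd, hne⟩ := hΩ
  obtain ⟨C, hC⟩ := hbdd
  -- C is nonnegative
  have hC0 : 0 ≤ C := by
    have h1 := aux_funk_nonneg hop (hx 0) (hy 0)
    have h2 := aux_funk_nonneg hop (hy 0) (hx 0)
    have := hC 0
    simp only [hilbertDist] at this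
    linarith
  set lam : ℝ := 1 - Real.exp (-(2 * C)) with hlamdef
  have hlam0 : 0 ≤ lam := by
    have : Real.exp (-(2 * C)) ≤ 1 := Real.exp_le_one_iff.mpr (by linarith)
    simp only [hlamdef]; linarith
  have hlam1 : lam < 1 := by
    have : 0 < Real.exp (-(2 * C)) := Real.exp_pos _
    simp only [hlamdef]; linarith
  set μ : ℝ := (1 + lam) / 2 with hμdef
  have hμ0 : 0 < μ := by simp only [hμdef]; linarith
  have hμ1 : μ < 1 := by simp only [hμdef]; linarith
  have hlamμ : lam < μ := by simp only [hμdef]; linarith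
  -- construct the auxiliary sequence w
  have hkey : ∀ k, ∃ z ∈ Ω, x k = (1 - μ) • y k + μ • z := by
    intro k
    have hfunk : funkDist Ω (y k) (x k) ≤ 2 * C := by
      have h1 := aux_funk_nonneg hop (hx k) (hy k)
      have := hC k
      simp only [hilbertDist] at this
      linarith
    have hg := aux_gauge_le_of_funk_le hop (hx k) hfunk
    exact aux_exists_combo hop hconv (hy k) hμ0 (lt_of_le_of_lt hg hlamμ)
  choose w hwΩ hweq using hkey
  have hK : IsCompact (closure Ω) := hbd.isCompact_closure
  -- main subsequence argument
  apply tendsto_of_subseq_tendsto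
  intro ns hns
  obtain ⟨y', hy', φ, hφ, hyt⟩ :=
    hK.tendsto_subseq (x := fun j => y (ns j)) (fun j => subset_closure (hy (ns j)))
  obtain ⟨w', hw', ψ, hψ, hwt⟩ :=
    hK.tendsto_subseq (x := fun j => w (ns (φ j))) (fun j => subset_closure (hwΩ (ns (φ j))))
  set m : ℕ → ℕ := fun j => φ (ψ j) with hm
  have hyt' : Tendsto (fun j => y (ns (m j))) atTop (nhds y') := hyt.comp hψ.tendsto_atTop
  have hwt' : Tendsto (fun j => w (ns (m j))) atTop (nhds w') := hwt
  have hxt : Tendsto (fun j => x (ns (m j))) atTop (nhds xinf) := by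
    have h1 : Tendsto (fun j => ns (m j)) atTop atTop :=
      hns.comp ((hφ.comp hψ).tendsto_atTop)
    exact hlim.comp h1
  have hcombo : Tendsto (fun j => (1 - μ) • y (ns (m j)) + μ • w (ns (m j))) atTop
      (nhds ((1 - μ) • y' + μ • w')) :=
    (hyt'.const_smul (1 - μ)).add (hwt'.const_smul μ)
  have heq : xinf = (1 - μ) • y' + μ • w' := by
    refine tendsto_nhds_unique hxt ?_
    convert hcombo using 2 with j
    exact hweq (ns (m j))
  have hninΩ : xinf ∉ Ω := by
    have := hext.1
    rw [hop.frontier_eq] at this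
    exact this.2
  -- y' and w' are on the frontier
  have hfy' : y' ∈ frontier Ω := by
    rw [hop.frontier_eq]
    refine ⟨hy', fun h => hninΩ ?_⟩
    have : xinf ∈ interior Ω := by
      rw [heq]
      exact hconv.combo_interior_closure_mem_interior (by rw [hop.interior_eq]; exact h) hw'
        (by linarith) hμ0.le (by ring)
    exact interior_subset this
  have hfw' : w' ∈ frontier Ω := by
    rw [hop.frontier_eq]
    refine ⟨hw', fun h => hninΩ ?_⟩
    have : xinf ∈ interior Ω := by
      rw [heq]
      exact hconv.combo_closure_interior_mem_interior hy' (by rw [hop.interior_eq]; exact h)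
        (by linarith) hμ0 (by ring)
    exact interior_subset this
  have hseg : xinf ∈ openSegment ℝ y' w' :=
    ⟨1 - μ, μ, by linarith, hμ0, by ring, heq.symm⟩
  have hyw : y' = w' := hext.2 y' hfy' w' hfw' hseg
  have hy'eq : y' = xinf := by
    rw [heq, ← hyw, ← add_smul]
    norm_num
  exact ⟨m, hy'eq ▸ hyt'⟩
end

section
/- Let Ω be a properly convex open set and γ ∈ Aut(Ω). If for some x ∈ Ω the sequence (γⁿ·x) converges to an extremal point p ∈ ∂Ω, then the sequence of maps (γⁿ) converges to the constant map p uniformly on compact subsets of Ω. -/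
open Set Filter Projectivization MeasureTheory

/-- The real vector space `ℝ^{n+1}` underlying the projective space `P^n`. -/
abbrev PV (n : ℕ) := Fin (n+1) → ℝ

/-- The real projective space `P^n = P(ℝ^{n+1})`. -/
abbrev PS (n : ℕ) := Projectivization ℝ (PV n)

/-- The quotient topology on projective space. -/
noncomputable instance (n : ℕ) : TopologicalSpace (PS n) :=
  TopologicalSpace.coinduced (Projectivization.mk' ℝ) inferInstance

/-- `SL_{n+1}(ℝ)`, the group of projective transformations of `P^n`. -/
abbrev SL (n : ℕ) := Matrix.SpecialLinearGroup (Fin (n+1)) ℝ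

instance (n : ℕ) : TopologicalSpace (SL n) :=
  TopologicalSpace.induced (fun g => (g : Matrix (Fin (n+1)) (Fin (n+1)) ℝ)) inferInstance

/-- The action of `SL_{n+1}(ℝ)` on `P^n` by projective transformations. -/
noncomputable def pact {n : ℕ} (g : SL n) (x : PS n) : PS n :=
  Projectivization.mk ℝ ((g : Matrix (Fin (n+1)) (Fin (n+1)) ℝ).mulVec x.rep) (by
    intro h
    apply x.rep_nonzero
    have h2 : ((g⁻¹ : SL n) : Matrix (Fin (n+1)) (Fin (n+1)) ℝ).mulVec
        (((g : SL n) : Matrix (Fin (n+1)) (Fin (n+1)) ℝ).mulVec x.rep) = x.rep := by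
      rw [Matrix.mulVec_mulVec, ← Matrix.SpecialLinearGroup.coe_mul, inv_mul_cancel,
        Matrix.SpecialLinearGroup.coe_one, Matrix.one_mulVec]
    rw [← h2, h, Matrix.mulVec_zero])

/-- The affine chart of `P^n` associated with a linear form `f`: the point `x` is sent to
the representative `v` of `x` normalized so that `f v = 1` (well defined whenever
`f` does not vanish on representatives of `x`). -/
noncomputable def chart {n : ℕ} (f : PV n →ₗ[ℝ] ℝ) (x : PS n) : PV n := (f x.rep)⁻¹ • x.rep

/-- `Ω` is a properly convex open subset of `P^n`, as witnessed by the affine chart given by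
`f`: the closure of `Ω` avoids the projective hyperplane `{f = 0}`, and in the affine
chart `{f = 1}`, `Ω` is a bounded convex open set. -/
structure IsPCOWith {n : ℕ} (f : PV n →ₗ[ℝ] ℝ) (Ω : Set (PS n)) : Prop where
  nonempty : Ω.Nonempty
  isOpen : IsOpen Ω
  avoids : ∀ x ∈ closure Ω, f x.rep ≠ 0
  convex : Convex ℝ (chart f '' Ω)
  bounded : Bornology.IsBounded (chart f '' Ω)

/-- The Hilbert distance on a properly convex open set `Ω ⊆ P^n`, computed in the affine
chart given by `f` (independent of the chart, by projective invariance of the cross-ratio). -/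
noncomputable def phdist {n : ℕ} (f : PV n →ₗ[ℝ] ℝ) (Ω : Set (PS n)) (x y : PS n) : ℝ :=
  hilbertDist (chart f '' Ω) (chart f x) (chart f y)

/-- `g` preserves `Ω`, i.e. `g` belongs to `Aut(Ω)`. -/
def InAut {n : ℕ} (g : SL n) (Ω : Set (PS n)) : Prop := pact g '' Ω = Ω

/-- `Ω` is strictly convex: its boundary `∂Ω` contains no nontrivial segment
(read in the affine chart given by `f`). -/
def StrictlyConvexW {n : ℕ} (f : PV n →ₗ[ℝ] ℝ) (Ω : Set (PS n)) : Prop :=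
  ∀ p ∈ frontier Ω, ∀ q ∈ frontier Ω,
    segment ℝ (chart f p) (chart f q) ⊆ chart f '' (frontier Ω) → p = q

/-- `∂Ω` is of class `C¹`: at every boundary point the supporting affine hyperplane of `Ω`
(in the affine chart given by `f`) is unique, i.e. any two supporting linear forms agree up
to positive scaling and adding a multiple of `f`. -/
def C1BoundaryW {n : ℕ} (f : PV n →ₗ[ℝ] ℝ) (Ω : Set (PS n)) : Prop :=
  ∀ p ∈ frontier Ω, ∀ u v : PV n →ₗ[ℝ] ℝ,
    (∀ y ∈ Ω, u (chart f y) < u (chart f p)) → (∀ y ∈ Ω, v (chart f y) < v (chart f p)) →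
    ∃ c d : ℝ, 0 < c ∧ v = c • u + d • f

/-- `p` is an extremal point of `∂Ω`: it is not in the interior of any nontrivial
segment contained in `∂Ω` (read in the affine chart given by `f`). -/
def IsExtremalPointW {n : ℕ} (f : PV n →ₗ[ℝ] ℝ) (Ω : Set (PS n)) (p : PS n) : Prop :=
  p ∈ frontier Ω ∧ ∀ q ∈ frontier Ω, ∀ r ∈ frontier Ω,
    chart f p ∈ openSegment ℝ (chart f q) (chart f r) → q = r

/-- The translation distance `τ(g) = inf_{x ∈ Ω} d_Ω(x, g x)`. -/
noncomputable def transDist {n : ℕ} (f : PV n →ₗ[ℝ] ℝ) (Ω : Set (PS n)) (g : SL n) : ℝ :=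
  ⨅ x : Ω, phdist f Ω x.1 (pact g x.1)

/-- `g` is elliptic: it fixes a point of `Ω`. -/
def IsEllipticW {n : ℕ} (Ω : Set (PS n)) (g : SL n) : Prop := ∃ x ∈ Ω, pact g x = x

/-- `g` is hyperbolic: its translation distance is positive and attained. -/
def IsHyperbolicW {n : ℕ} (f : PV n →ₗ[ℝ] ℝ) (Ω : Set (PS n)) (g : SL n) : Prop :=
  ∃ m : ℝ, 0 < m ∧ (∀ y ∈ Ω, m ≤ phdist f Ω y (pact g y)) ∧
    ∃ x₀ ∈ Ω, phdist f Ω x₀ (pact g x₀) = m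

/-- `g` is parabolic: its translation distance is `0` and is not attained. -/
def IsParabolicW {n : ℕ} (f : PV n →ₗ[ℝ] ℝ) (Ω : Set (PS n)) (g : SL n) : Prop :=
  (∀ y ∈ Ω, 0 < phdist f Ω y (pact g y)) ∧
    ∀ ε : ℝ, 0 < ε → ∃ y ∈ Ω, phdist f Ω y (pact g y) < ε


/-!
In the affine chart `S = chart f '' Ω`, an element `g` of `Aut(Ω)` acts by the projective map
`v ↦ (φ v)⁻¹ • A v` (with `A` the matrix of `g` and `φ = f ∘ A`). Along the line through `x` and
`y` this map multiplies `1 - gauge` (which locates the exit point of the ray from `x` through `y`)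
by `φ x / φ y`, so the two Funk terms of the Hilbert distance change by opposite amounts and the
Hilbert distance does not increase.

Hence for `y` in the compact set `K` the point `γ^m y` stays within bounded Hilbert distance of
`γ^m x`; in particular `γ^m x` divides a segment from `γ^m y` to a point of `S` in a ratio
bounded away from `1`. As `γ^m x → p`, a limit point of `γ^m y` other than `p` would place `p`
inside a nondegenerate segment of `closure S`, which extremality forbids; compactness of
`closure S` makes this uniform in `y ∈ K`.
-/

open AffineMap
open scoped Pointwise Topology

section Funk

variable {E : Type*} [AddCommGroup E] [Module ℝ E] {S : Set E} {x y : E}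

lemma gauge_sub_le_of_eq_lineMap {u : E} (hu : u ∈ S) {t : ℝ} (ht : 0 ≤ t)
    (hy : y = lineMap x u t) : gauge ((· - x) '' S) (y - x) ≤ t :=
  gauge_le_of_mem ht
    ⟨u - x, ⟨u, hu, rfl⟩, by rw [hy, lineMap_apply_module', add_sub_cancel_right]⟩

lemma funkDist_nonneg (hy : y ∈ S) : 0 ≤ funkDist S x y := by
  have h1 : gauge ((· - x) '' S) (y - x) ≤ 1 :=
    gauge_sub_le_of_eq_lineMap hy zero_le_one (lineMap_apply_one x y).symm
  have h0 : 0 ≤ gauge ((· - x) '' S) (y - x) := gauge_nonneg _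
  exact neg_nonneg.2 (Real.log_nonpos (by linarith) (by linarith))

lemma funkDist_le_of_gauge_le {t : ℝ} (hg : gauge ((· - x) '' S) (y - x) ≤ t) (ht : t < 1) :
    funkDist S x y ≤ -Real.log (1 - t) :=
  neg_le_neg (Real.log_le_log (by linarith) (by linarith))

lemma exists_eq_lineMap_of_funkDist_le (hy : y ∈ S) (hg : gauge ((· - x) '' S) (y - x) < 1)
    {C : ℝ} (hC : funkDist S x y ≤ C) :
    ∃ u ∈ S, ∃ t ∈ Icc 0 (1 - Real.exp (-C) / 2), y = lineMap x u t := by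
  have hexp : Real.exp (-C) ≤ 1 - gauge ((· - x) '' S) (y - x) := by
    rw [← Real.exp_log (by linarith : 0 < 1 - gauge ((· - x) '' S) (y - x))]
    exact Real.exp_le_exp.2 (by unfold funkDist at hC; linarith)
  obtain ⟨t, ⟨ht0, _, ⟨u, hu, rfl⟩, hut⟩, htT⟩ :=
    exists_lt_of_csInf_lt (s := {r : ℝ | 0 < r ∧ y - x ∈ r • ((· - x) '' S)})
      ⟨1, one_pos, by rw [one_smul]; exact ⟨y, hy, rfl⟩⟩
    (show gauge ((· - x) '' S) (y - x) < 1 - Real.exp (-C) / 2 by linarith [Real.exp_pos (-C)])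
  exact ⟨u, hu, t, ⟨ht0.le, htT.le⟩, by
    rw [lineMap_apply_module', show t • (u - x) = y - x from hut, sub_add_cancel]⟩

lemma div_pos_of_convex_of_ne_zero (hS : Convex ℝ S) {φ : E →ₗ[ℝ] ℝ}
    (hφ : ∀ z ∈ S, φ z ≠ 0) {z w : E} (hz : z ∈ S) (hw : w ∈ S) : 0 < φ z / φ w := by
  have hI : (φ '' S).OrdConnected := convex_iff_ordConnected.1 (hS.linear_image φ)
  have h0 : (0 : ℝ) ∉ φ '' S := fun ⟨v, hv, h⟩ => hφ v hv h
  rcases (hφ z hz).lt_or_gt with hz' | hz' <;> rcases (hφ w hw).lt_or_gt with hw' | hw'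
  · exact div_pos_of_neg_of_neg hz' hw'
  · exact absurd (hI.out ⟨z, hz, rfl⟩ ⟨w, hw, rfl⟩ ⟨hz'.le, hw'.le⟩) h0
  · exact absurd (hI.out ⟨w, hw, rfl⟩ ⟨z, hz, rfl⟩ ⟨hw'.le, hz'.le⟩) h0
  · exact div_pos hz' hw'

variable {A : E →ₗ[ℝ] E} {φ : E →ₗ[ℝ] ℝ}

-- With `T v = (φ v)⁻¹ • A v`: if `y - x = r • (z - x)` then `T y - T x = r' • (T z - T x)`
-- where `1 - r' = (1 - r) * (φ x / φ y)`; take the infimum over `r`.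
lemma one_sub_gauge_mul_le (hS : Convex ℝ S) (hφ : ∀ z ∈ S, φ z ≠ 0)
    (hA : ∀ z ∈ S, (φ z)⁻¹ • A z ∈ S) (hx : x ∈ S) (hy : y ∈ S) :
    (1 - gauge ((· - x) '' S) (y - x)) * (φ x / φ y) ≤
      1 - gauge ((· - (φ x)⁻¹ • A x) '' S) ((φ y)⁻¹ • A y - (φ x)⁻¹ • A x) := by
  set c := φ x / φ y
  have hc : 0 < c := div_pos_of_convex_of_ne_zero hS hφ hx hy
  set g' := gauge ((· - (φ x)⁻¹ • A x) '' S) ((φ y)⁻¹ • A y - (φ x)⁻¹ • A x)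
  have key : ∀ r ∈ {r : ℝ | 0 < r ∧ y - x ∈ r • ((· - x) '' S)},
      g' ≤ 1 - (1 - r) * c := by
    rintro r ⟨hr, _, ⟨z, hz, rfl⟩, hzr⟩
    have hzy : 0 < φ z / φ y := div_pos_of_convex_of_ne_zero hS hφ hz hy
    have hφy : φ y = r * (φ z - φ x) + φ x := by
      rw [← sub_eq_iff_eq_add, ← map_sub, ← hzr, map_smul, map_sub, smul_eq_mul]
    have hAy : A y = r • (A z - A x) + A x := by
      rw [← sub_eq_iff_eq_add, ← map_sub, ← hzr, map_smul, map_sub]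
    have hr' : 1 - (1 - r) * c = r * (φ z / φ y) := by
      simp only [c]
      field_simp [hφ y hy]
      linarith
    refine gauge_le_of_mem (by rw [hr']; positivity)
      ⟨_, ⟨_, hA z hz, rfl⟩, ?_⟩
    have hx₀ := hφ x hx
    have hz₀ := hφ z hz
    have hy₀ := hφ y hy
    rw [hr', hAy]
    rw [hφy] at hy₀ ⊢
    match_scalars <;> field_simp; ring
  have hle : (g' - 1 + c) / c ≤ gauge ((· - x) '' S) (y - x) :=
    le_csInf ⟨1, one_pos, by rw [one_smul]; exact ⟨y, hy, rfl⟩⟩ fun r hr => by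
      rw [div_le_iff₀ hc]; linarith [key r hr]
  rw [div_le_iff₀ hc] at hle
  linarith

lemma funkDist_map_le (hS : Convex ℝ S) (hφ : ∀ z ∈ S, φ z ≠ 0)
    (hA : ∀ z ∈ S, (φ z)⁻¹ • A z ∈ S) (hx : x ∈ S) (hy : y ∈ S)
    (hg : gauge ((· - x) '' S) (y - x) < 1) :
    funkDist S ((φ x)⁻¹ • A x) ((φ y)⁻¹ • A y) ≤
      funkDist S x y + Real.log (φ y / φ x) := by
  have hc := div_pos_of_convex_of_ne_zero hS hφ hx hy
  calc funkDist S ((φ x)⁻¹ • A x) ((φ y)⁻¹ • A y)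
      ≤ -Real.log ((1 - gauge ((· - x) '' S) (y - x)) * (φ x / φ y)) :=
        neg_le_neg (Real.log_le_log (by nlinarith) (one_sub_gauge_mul_le hS hφ hA hx hy))
    _ = funkDist S x y + Real.log (φ y / φ x) := by
        rw [Real.log_mul (by linarith) hc.ne', ← inv_div, Real.log_inv, funkDist]
        ring

lemma hilbertDist_map_le (hS : Convex ℝ S) (hφ : ∀ z ∈ S, φ z ≠ 0)
    (hA : ∀ z ∈ S, (φ z)⁻¹ • A z ∈ S) (hx : x ∈ S) (hy : y ∈ S)
    (hxy : gauge ((· - x) '' S) (y - x) < 1) (hyx : gauge ((· - y) '' S) (x - y) < 1) :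
    hilbertDist S ((φ x)⁻¹ • A x) ((φ y)⁻¹ • A y) ≤ hilbertDist S x y := by
  have h₁ := funkDist_map_le hS hφ hA hx hy hxy
  have h₂ := funkDist_map_le hS hφ hA hy hx hyx
  have h₀ : Real.log (φ y / φ x) + Real.log (φ x / φ y) = 0 := by
    rw [← inv_div, Real.log_inv, neg_add_cancel]
  unfold hilbertDist
  linarith

end Funk

section Normed

variable {E : Type*} [NormedAddCommGroup E] [NormedSpace ℝ E] {S : Set E} {x y : E}
  {f : E →ₗ[ℝ] ℝ} {δ : ℝ}

lemma gauge_sub_le_of_closedBall_inter_subset (hx : f x = 1) (hy : f y = 1) (hδ : 0 < δ)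
    (hball : Metric.closedBall y δ ∩ {u | f u = 1} ⊆ S) :
    gauge ((· - x) '' S) (y - x) ≤ dist y x / (dist y x + δ) := by
  rcases eq_or_ne y x with rfl | hne
  · simp
  have hd : 0 < dist y x := dist_pos.2 hne
  have hu : y + (δ / dist y x) • (y - x) ∈ S := by
    refine hball ⟨Metric.mem_closedBall.2 (le_of_eq ?_), by simp [hx, hy]⟩
    rw [dist_eq_norm, add_sub_cancel_left, norm_smul, Real.norm_eq_abs, abs_of_pos (by positivity),
      ← dist_eq_norm, div_mul_cancel₀ _ hd.ne']
  refine gauge_sub_le_of_eq_lineMap hu (by positivity) ?_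
  rw [lineMap_apply_module', add_sub_right_comm]
  match_scalars <;> field_simp; ring

lemma funkDist_le_of_closedBall_inter_subset (hx : f x = 1) (hy : f y = 1) (hδ : 0 < δ)
    (hball : Metric.closedBall y δ ∩ {u | f u = 1} ⊆ S) :
    funkDist S x y ≤ Real.log ((dist y x + δ) / δ) := by
  have hlt : dist y x / (dist y x + δ) < 1 := by
    rw [div_lt_one (by positivity)]; linarith
  refine (funkDist_le_of_gauge_le
    (gauge_sub_le_of_closedBall_inter_subset hx hy hδ hball) hlt).trans (le_of_eq ?_)
  rw [← Real.log_inv, one_sub_div (by positivity), add_sub_cancel_left, inv_div]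

end Normed

section Extreme

variable {E ι : Type*} [TopologicalSpace E] [AddCommGroup E] [Module ℝ E]
  [IsTopologicalAddGroup E] [ContinuousSMul ℝ E] [T2Space E]

-- For open `U ∋ π`, the points `lineMap q w t` with `q ∉ U` form a compact set which, by
-- extremality, misses `π`; eventually `a i` lies outside it, forcing `b i ∈ U`.
theorem tendsto_of_tendsto_lineMap_extremePoint {A : Set E} (hA : IsCompact A) {π : E}
    (hπ : π ∈ A.extremePoints ℝ) {T : ℝ} (hT : T < 1) {l : Filter ι} {a b : ι → E}
    (ha : Tendsto a l (𝓝 π))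
    (hab : ∀ᶠ i in l, b i ∈ A ∧ ∃ w ∈ A, ∃ t ∈ Icc 0 T, a i = lineMap (b i) w t) :
    Tendsto b l (𝓝 π) := by
  rw [tendsto_nhds]
  intro U hU hπU
  set F : E × E × ℝ → E := fun q => lineMap q.1 q.2.1 q.2.2
  set K := (A ×ˢ A ×ˢ Icc 0 T) ∩ {q | q.1 ∉ U}
  have hK : IsCompact K := (hA.prod (hA.prod isCompact_Icc)).inter_right
    (hU.isClosed_compl.preimage continuous_fst)
  have hπK : π ∉ F '' K := by
    rintro ⟨⟨q, w, t⟩, ⟨⟨hq, hw, ht0, htT⟩, hqU⟩, hFq⟩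
    rcases ht0.eq_or_lt with rfl | ht0
    · exact hqU (by simpa [F, ← hFq] using hπU)
    · have hseg : π ∈ openSegment ℝ q w := by
        rw [openSegment_eq_image_lineMap]
        exact ⟨t, ⟨ht0, by linarith⟩, hFq⟩
      exact hqU (hπ.2 hq hw hseg ▸ hπU)
  have hV : (F '' K)ᶜ ∈ 𝓝 π :=
    ((hK.image lineMap_continuous_uncurry).isClosed.isOpen_compl).mem_nhds hπK
  filter_upwards [ha hV, hab] with i hi ⟨hbi, w, hw, t, ht, hai⟩
  by_contra hbU
  exact hi ⟨(b i, w, t), ⟨⟨hbi, hw, ht⟩, hbU⟩, hai.symm⟩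

end Extreme

section Projective

variable {n : ℕ}

open Matrix.SpecialLinearGroup in
lemma pact_mk (g : SL n) (v : PV n) (hv : v ≠ 0) :
    pact g (Projectivization.mk ℝ v hv) =
      Projectivization.mk ℝ (toLin' g v) ((toLin' g).map_ne_zero_iff.2 hv) := by
  obtain ⟨a, ha⟩ := Projectivization.exists_smul_eq_mk_rep ℝ v hv
  rw [pact, Projectivization.mk_eq_mk_iff]
  exact ⟨a, by rw [← ha, Units.smul_def, Units.smul_def, Matrix.mulVec_smul]; rfl⟩

lemma pact_one (z : PS n) : pact 1 z = z := by
  conv_rhs => rw [← z.mk_rep]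
  simp [pact]

lemma pact_mul (g h : SL n) (z : PS n) : pact (g * h) z = pact g (pact h z) := by
  rw [show pact h z = Projectivization.mk ℝ _ _ from rfl, pact_mk]
  simp only [pact, Matrix.SpecialLinearGroup.coe_mul, ← Matrix.mulVec_mulVec]
  rfl

lemma InAut.pact_pow_mem {γ : SL n} {Ω : Set (PS n)} (hγ : InAut γ Ω) (m : ℕ) {z : PS n}
    (hz : z ∈ Ω) : pact (γ ^ m) z ∈ Ω := by
  induction m with
  | zero => rwa [pow_zero, pact_one]
  | succ m ih => rw [pow_succ', pact_mul, ← hγ]; exact mem_image_of_mem _ ih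

lemma chart_mk (f : PV n →ₗ[ℝ] ℝ) (v : PV n) (hv : v ≠ 0) :
    chart f (Projectivization.mk ℝ v hv) = (f v)⁻¹ • v := by
  obtain ⟨a, ha⟩ := Projectivization.exists_smul_eq_mk_rep ℝ v hv
  rw [chart, ← ha, Units.smul_def, map_smul, smul_eq_mul, smul_smul]
  congr 1
  field_simp

lemma map_rep_mk_ne_zero_iff (f : PV n →ₗ[ℝ] ℝ) {v : PV n} (hv : v ≠ 0) :
    f (Projectivization.mk ℝ v hv).rep ≠ 0 ↔ f v ≠ 0 := by
  obtain ⟨a, ha⟩ := Projectivization.exists_smul_eq_mk_rep ℝ v hv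
  rw [← ha, Units.smul_def, map_smul, smul_eq_mul, mul_ne_zero_iff, and_iff_right a.ne_zero]

lemma map_chart_eq_one (f : PV n →ₗ[ℝ] ℝ) {z : PS n} (hz : f z.rep ≠ 0) :
    f (chart f z) = 1 := by
  rw [chart, map_smul, smul_eq_mul, inv_mul_cancel₀ hz]

lemma chart_ne_zero (f : PV n →ₗ[ℝ] ℝ) {z : PS n} (hz : f z.rep ≠ 0) : chart f z ≠ 0 :=
  fun h => one_ne_zero (by rw [← map_chart_eq_one f hz, h, map_zero])

lemma mk_chart (f : PV n →ₗ[ℝ] ℝ) {z : PS n} (hz : f z.rep ≠ 0) :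
    Projectivization.mk ℝ (chart f z) (chart_ne_zero f hz) = z := by
  conv_rhs => rw [← z.mk_rep]
  exact (Projectivization.mk_eq_mk_iff ℝ _ _ _ _).2 ⟨Units.mk0 _ (inv_ne_zero hz), rfl⟩

open Matrix.SpecialLinearGroup in
lemma chart_pact (f : PV n →ₗ[ℝ] ℝ) (g : SL n) {z : PS n} (hz : f z.rep ≠ 0) :
    chart f (pact g z) =
      ((f ∘ₗ (toLin' g : PV n →ₗ[ℝ] PV n)) (chart f z))⁻¹ •
        toLin' g (chart f z) := by
  conv_lhs => rw [← mk_chart f hz, pact_mk, chart_mk]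
  rfl

lemma isOpen_setOf_map_rep_ne_zero (f : PV n →ₗ[ℝ] ℝ) :
    IsOpen {z : PS n | f z.rep ≠ 0} := by
  rw [isOpen_coinduced]
  have : Projectivization.mk' ℝ ⁻¹' {z : PS n | f z.rep ≠ 0} = {v | f v.1 ≠ 0} := by
    ext ⟨v, hv⟩
    exact map_rep_mk_ne_zero_iff f hv
  rw [this]
  exact isOpen_ne_fun (f.continuous_of_finiteDimensional.comp continuous_subtype_val)
    continuous_const

lemma continuousOn_chart (f : PV n →ₗ[ℝ] ℝ) :
    ContinuousOn (chart f) {z | f z.rep ≠ 0} := by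
  have hf : Continuous f := f.continuous_of_finiteDimensional
  have hnorm : ContinuousOn (fun v : PV n => (f v)⁻¹ • v) {v | f v ≠ 0} :=
    (hf.continuousOn.inv₀ fun _ h => h).smul continuousOn_id
  rw [continuousOn_open_iff (isOpen_setOf_map_rep_ne_zero f)]
  intro V hV
  rw [isOpen_coinduced]
  have : Projectivization.mk' ℝ ⁻¹' ({z | f z.rep ≠ 0} ∩ chart f ⁻¹' V) =
      Subtype.val ⁻¹' ({v | f v ≠ 0} ∩ (fun v : PV n => (f v)⁻¹ • v) ⁻¹' V) := by
    ext ⟨v, hv⟩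
    simp only [mem_preimage, mem_inter_iff, mem_ofPred_eq, Projectivization.mk'_eq_mk,
      map_rep_mk_ne_zero_iff f hv, chart_mk]
  rw [this]
  exact (hnorm.isOpen_inter_preimage (isOpen_ne_fun hf continuous_const) hV).preimage
    continuous_subtype_val

lemma continuousAt_chart (f : PV n →ₗ[ℝ] ℝ) {z : PS n} (hz : f z.rep ≠ 0) :
    ContinuousAt (chart f) z :=
  (continuousOn_chart f).continuousAt ((isOpen_setOf_map_rep_ne_zero f).mem_nhds hz)

def coneOver (Ω : Set (PS n)) : Set (PV n) :=
  {v | ∃ hv : v ≠ 0, Projectivization.mk ℝ v hv ∈ Ω}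

lemma isOpen_coneOver {Ω : Set (PS n)} (hΩ : IsOpen Ω) : IsOpen (coneOver Ω) := by
  have : coneOver Ω = Subtype.val '' (Projectivization.mk' ℝ ⁻¹' Ω) := by
    ext v
    simp [coneOver]
  rw [this]
  exact isOpen_ne.isOpenMap_subtype_val _ (hΩ.preimage continuous_coinduced_rng)

end Projective

namespace IsPCOWith

variable {n : ℕ} {f : PV n →ₗ[ℝ] ℝ} {Ω : Set (PS n)}

lemma mem_chart_image_iff (hΩ : IsPCOWith f Ω) {v : PV n} :
    v ∈ chart f '' Ω ↔ f v = 1 ∧ v ∈ coneOver Ω := by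
  constructor
  · rintro ⟨z, hz, rfl⟩
    have hz₀ := hΩ.avoids z (subset_closure hz)
    exact ⟨map_chart_eq_one f hz₀, chart_ne_zero f hz₀, by rwa [mk_chart f hz₀]⟩
  · rintro ⟨hv₁, hv, hmem⟩
    exact ⟨_, hmem, by rw [chart_mk, hv₁, inv_one, one_smul]⟩

lemma map_eq_one_of_mem_closure (hΩ : IsPCOWith f Ω) {v : PV n}
    (hv : v ∈ closure (chart f '' Ω)) : f v = 1 :=
  closure_minimal (fun _ hu => (hΩ.mem_chart_image_iff.1 hu).1)
    (isClosed_singleton.preimage f.continuous_of_finiteDimensional) hv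

lemma exists_closedBall_inter_subset (hΩ : IsPCOWith f Ω) {T : Set (PV n)}
    (hT : IsCompact T) (hTS : T ⊆ chart f '' Ω) :
    ∃ δ > 0, ∀ y ∈ T, Metric.closedBall y δ ∩ {u | f u = 1} ⊆ chart f '' Ω := by
  obtain ⟨δ, hδ, hsub⟩ := hT.exists_cthickening_subset_open (isOpen_coneOver hΩ.isOpen)
    fun y hy => (hΩ.mem_chart_image_iff.1 (hTS hy)).2
  exact ⟨δ, hδ, fun y hy u ⟨hdist, hu⟩ => hΩ.mem_chart_image_iff.2
    ⟨hu, hsub (Metric.mem_cthickening_of_dist_le u y δ T hy hdist)⟩⟩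

lemma gauge_lt_one (hΩ : IsPCOWith f Ω) {x y : PV n} (hx : x ∈ chart f '' Ω)
    (hy : y ∈ chart f '' Ω) : gauge ((· - x) '' chart f '' Ω) (y - x) < 1 := by
  obtain ⟨δ, hδ, hball⟩ :=
    hΩ.exists_closedBall_inter_subset isCompact_singleton (singleton_subset_iff.2 hy)
  refine (gauge_sub_le_of_closedBall_inter_subset (hΩ.mem_chart_image_iff.1 hx).1
    (hΩ.mem_chart_image_iff.1 hy).1 hδ (hball y rfl)).trans_lt ?_
  rw [div_lt_one (by positivity)]
  linarith

lemma exists_hilbertDist_le (hΩ : IsPCOWith f Ω) {x : PS n} (hx : x ∈ Ω) {K : Set (PS n)}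
    (hK : K ⊆ Ω) (hKc : IsCompact K) :
    ∃ C, ∀ y ∈ K, hilbertDist (chart f '' Ω) (chart f y) (chart f x) ≤ C := by
  set S := chart f '' Ω
  set T := insert (chart f x) (chart f '' K)
  have hT : IsCompact T := (hKc.image_of_continuousOn ((continuousOn_chart f).mono
    fun z hz => hΩ.avoids z (subset_closure (hK hz)))).insert _
  have hTS : T ⊆ S := insert_subset (mem_image_of_mem _ hx) (image_mono hK)
  obtain ⟨δ, hδ, hball⟩ := hΩ.exists_closedBall_inter_subset hT hTS
  have hfunk : ∀ a ∈ S, ∀ b ∈ T,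
      funkDist S a b ≤ Real.log ((Metric.diam S + δ) / δ) := by
    intro a ha b hb
    refine (funkDist_le_of_closedBall_inter_subset (hΩ.mem_chart_image_iff.1 ha).1
      (hΩ.mem_chart_image_iff.1 (hTS hb)).1 hδ (hball b hb)).trans ?_
    gcongr
    exact Metric.dist_le_diam_of_mem hΩ.bounded (hTS hb) ha
  refine ⟨Real.log ((Metric.diam S + δ) / δ), fun y hy => ?_⟩
  have h₁ := hfunk _ (mem_image_of_mem _ (hK hy)) _ (mem_insert _ _)
  have h₂ := hfunk _ (mem_image_of_mem _ hx) _ (mem_insert_of_mem _ (mem_image_of_mem _ hy))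
  unfold hilbertDist
  linarith

lemma lineMap_mem (hΩ : IsPCOWith f Ω) {x z : PV n} (hx : x ∈ chart f '' Ω)
    (hz : z ∈ closure (chart f '' Ω)) {t : ℝ} (ht₀ : 0 ≤ t) (ht₁ : t < 1) :
    lineMap x z t ∈ chart f '' Ω := by
  -- Write the point as `(1 - t) • shift z' + t • z'` with `z' ∈ chart f '' Ω` so close to `z`
  -- that `shift z'` is still in the open cone over `Ω`.
  set shift : PV n → PV n := fun z' => x + (t / (1 - t)) • (z - z')
  have hshift : shift ⁻¹' coneOver Ω ∈ 𝓝 z := by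
    have hc : Continuous shift := by fun_prop
    refine hc.continuousAt.preimage_mem_nhds ?_
    simpa [shift] using (isOpen_coneOver hΩ.isOpen).mem_nhds (hΩ.mem_chart_image_iff.1 hx).2
  obtain ⟨z', hz'O, hz'⟩ := mem_closure_iff_nhds.1 hz _ hshift
  have hx' : shift z' ∈ chart f '' Ω := by
    refine hΩ.mem_chart_image_iff.2 ⟨?_, hz'O⟩
    simp [shift, (hΩ.mem_chart_image_iff.1 hx).1, hΩ.map_eq_one_of_mem_closure hz,
      (hΩ.mem_chart_image_iff.1 hz').1]
  convert hΩ.convex hx' hz' (sub_nonneg.2 ht₁.le) ht₀ (sub_add_cancel 1 t) using 1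
  have : 1 - t ≠ 0 := by linarith
  rw [lineMap_apply_module]
  simp only [shift]
  match_scalars <;> field_simp; ring

lemma mem_coneOver_frontier (hΩ : IsPCOWith f Ω) {q : PV n} (hq : q ∈ closure (chart f '' Ω))
    (hqS : q ∉ chart f '' Ω) : q ∈ coneOver (frontier Ω) := by
  have hq₁ := hΩ.map_eq_one_of_mem_closure hq
  have hq₀ : q ≠ 0 := fun h => by simp [h] at hq₁
  refine ⟨hq₀, ?_⟩
  rw [hΩ.isOpen.frontier_eq]
  refine ⟨?_, fun hmem => hqS (hΩ.mem_chart_image_iff.2 ⟨hq₁, hq₀, hmem⟩)⟩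
  have hsub : (⟨q, hq₀⟩ : {v : PV n // v ≠ 0}) ∈
      closure (Subtype.val ⁻¹' (chart f '' Ω)) := by
    rw [closure_subtype]
    refine closure_mono (fun v hv => ?_) hq
    obtain ⟨_, hv₀, _⟩ := hΩ.mem_chart_image_iff.1 hv
    exact ⟨⟨v, hv₀⟩, hv, rfl⟩
  exact map_mem_closure continuous_coinduced_rng hsub fun v hv => by
    obtain ⟨_, _, hmem⟩ := hΩ.mem_chart_image_iff.1 hv
    exact hmem

lemma chart_mem_extremePoints (hΩ : IsPCOWith f Ω) {p : PS n} (hp : IsExtremalPointW f Ω p) :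
    chart f p ∈ (closure (chart f '' Ω)).extremePoints ℝ := by
  have hp₀ : f p.rep ≠ 0 := hΩ.avoids p (frontier_subset_closure hp.1)
  have hpS : chart f p ∉ chart f '' Ω := fun h => by
    obtain ⟨_, _, hmem⟩ := hΩ.mem_chart_image_iff.1 h
    rw [mk_chart f hp₀] at hmem
    exact (hΩ.isOpen.frontier_eq ▸ hp.1).2 hmem
  refine ⟨(continuousAt_chart f hp₀).continuousWithinAt.mem_closure_image
    (frontier_subset_closure hp.1), fun q hq r hr hpqr => ?_⟩
  have hqS : q ∉ chart f '' Ω := fun h => hpS <| by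
    obtain ⟨t, ⟨ht₀, ht₁⟩, hqrt⟩ := (openSegment_eq_image_lineMap ℝ q r).subset hpqr
    exact hqrt ▸ hΩ.lineMap_mem h hr ht₀.le ht₁
  have hrS : r ∉ chart f '' Ω := fun h => hpS <| by
    obtain ⟨t, ⟨ht₀, ht₁⟩, hrqt⟩ :=
      (openSegment_eq_image_lineMap ℝ r q).subset (openSegment_symm ℝ q r ▸ hpqr)
    exact hrqt ▸ hΩ.lineMap_mem h hq ht₀.le ht₁
  obtain ⟨hq₀, hqΩ⟩ := hΩ.mem_coneOver_frontier hq hqS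
  obtain ⟨hr₀, hrΩ⟩ := hΩ.mem_coneOver_frontier hr hrS
  have hchart : ∀ v (hv : v ∈ closure (chart f '' Ω)) (hv₀ : v ≠ 0),
      chart f (Projectivization.mk ℝ v hv₀) = v := fun v hv hv₀ => by
    rw [chart_mk, hΩ.map_eq_one_of_mem_closure hv, inv_one, one_smul]
  have hqr : q = r := by
    have := congrArg (chart f) (hp.2 _ hqΩ _ hrΩ (by rwa [hchart q hq, hchart r hr]))
    rwa [hchart q hq, hchart r hr] at this
  subst hqr
  rw [openSegment_same] at hpqr
  exact hpqr.symm

open Matrix.SpecialLinearGroup in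
lemma hilbertDist_pact_le (hΩ : IsPCOWith f Ω) {g : SL n} (hg : ∀ z ∈ Ω, pact g z ∈ Ω)
    {u v : PS n} (hu : u ∈ Ω) (hv : v ∈ Ω) :
    hilbertDist (chart f '' Ω) (chart f (pact g u)) (chart f (pact g v)) ≤
      hilbertDist (chart f '' Ω) (chart f u) (chart f v) := by
  have hT : ∀ z ∈ Ω, chart f (pact g z) =
      ((f ∘ₗ (toLin' g : PV n →ₗ[ℝ] PV n)) (chart f z))⁻¹ • toLin' g (chart f z) :=
    fun z hz => chart_pact f g (hΩ.avoids z (subset_closure hz))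
  have hφ : ∀ w ∈ chart f '' Ω, (f ∘ₗ (toLin' g : PV n →ₗ[ℝ] PV n)) w ≠ 0 := by
    rintro _ ⟨z, hz, rfl⟩ h
    have := map_chart_eq_one f (hΩ.avoids _ (subset_closure (hg z hz)))
    rw [hT z hz, h, inv_zero, zero_smul, map_zero] at this
    exact zero_ne_one this
  have hA : ∀ w ∈ chart f '' Ω,
      ((f ∘ₗ (toLin' g : PV n →ₗ[ℝ] PV n)) w)⁻¹ • toLin' g w ∈ chart f '' Ω := by
    rintro _ ⟨z, hz, rfl⟩
    rw [← hT z hz]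
    exact mem_image_of_mem _ (hg z hz)
  have hu' := mem_image_of_mem (chart f) hu
  have hv' := mem_image_of_mem (chart f) hv
  rw [hT u hu, hT v hv]
  exact hilbertDist_map_le hΩ.convex hφ hA hu' hv' (hΩ.gauge_lt_one hu' hv')
    (hΩ.gauge_lt_one hv' hu')

lemma exists_eq_lineMap_pact (hΩ : IsPCOWith f Ω) {g : SL n} (hg : ∀ z ∈ Ω, pact g z ∈ Ω)
    {x y : PS n} (hx : x ∈ Ω) (hy : y ∈ Ω) {C : ℝ}
    (hC : hilbertDist (chart f '' Ω) (chart f y) (chart f x) ≤ C) :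
    ∃ w ∈ chart f '' Ω, ∃ t ∈ Icc 0 (1 - Real.exp (-(2 * C)) / 2),
      chart f (pact g x) = lineMap (chart f (pact g y)) w t := by
  have ha := mem_image_of_mem (chart f) (hg x hx)
  have hb := mem_image_of_mem (chart f) (hg y hy)
  refine exists_eq_lineMap_of_funkDist_le ha (hΩ.gauge_lt_one hb ha) ?_
  have h₀ := funkDist_nonneg (x := chart f (pact g x)) hb
  have h₁ := (hΩ.hilbertDist_pact_le hg hy hx).trans hC
  unfold hilbertDist at h₁
  linarith

end IsPCOWith

lemma tendstoUniformlyOn_const_of_tendsto {ι α β : Type*} [UniformSpace β]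
    {F : ι → α → β} {c : β} {l : Filter ι} {s : Set α}
    (h : Tendsto (fun q : ι × α => F q.1 q.2) (l ×ˢ 𝓟 s) (𝓝 c)) :
    TendstoUniformlyOn F (fun _ => c) l s := by
  rw [nhds_eq_comap_uniformity, tendsto_comap_iff] at h
  exact tendstoUniformlyOn_iff_tendsto.2 h

/-- If for some `x ∈ Ω` the orbit `(γ^m · x)` converges to an extremal boundary point `p`,
then `(γ^m)` converges to the constant map `p` uniformly on compact subsets of `Ω`
(read in the affine chart given by `f`). -/
theorem tendstoUniformlyOn_of_orbit_tendsto_extremal (n : ℕ) (f : PV n →ₗ[ℝ] ℝ)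
    (Ω : Set (PS n)) (hΩ : IsPCOWith f Ω) (γ : SL n) (hγ : InAut γ Ω)
    (x : PS n) (hx : x ∈ Ω) (p : PS n) (hp : IsExtremalPointW f Ω p)
    (horb : Tendsto (fun m : ℕ => pact (γ ^ m) x) atTop (nhds p)) :
    ∀ K : Set (PS n), K ⊆ Ω → IsCompact K →
      TendstoUniformlyOn (fun (m : ℕ) (y : PS n) => chart f (pact (γ ^ m) y))
        (fun _ => chart f p) atTop K := by
  intro K hK hKc
  obtain ⟨C, hC⟩ := hΩ.exists_hilbertDist_le hx hK hKc
  have hp₀ : f p.rep ≠ 0 := hΩ.avoids p (frontier_subset_closure hp.1)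
  refine tendstoUniformlyOn_const_of_tendsto <|
    tendsto_of_tendsto_lineMap_extremePoint hΩ.bounded.isCompact_closure
      (hΩ.chart_mem_extremePoints hp) (T := 1 - Real.exp (-(2 * C)) / 2)
      (by linarith [Real.exp_pos (-(2 * C))])
      (((continuousAt_chart f hp₀).tendsto.comp horb).comp tendsto_fst) ?_
  refine eventually_prod_principal_iff.2 (Eventually.of_forall fun m y hy => ?_)
  have hγm : ∀ z ∈ Ω, pact (γ ^ m) z ∈ Ω := fun _ => hγ.pact_pow_mem m
  obtain ⟨w, hw, t, ht, heq⟩ := hΩ.exists_eq_lineMap_pact hγm hx (hK hy) (hC y hy)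
  exact ⟨subset_closure (mem_image_of_mem _ (hγm y (hK hy))), w, subset_closure hw, t, ht, heq⟩
end

section
/- A unipotent element γ of SL_{n+1}(R) that preserves a properly convex open subset of P^n has odd degree, where the degree is the least k with (γ − 1)ᵏ = 0. -/
/-- An open proper convex cone in `ℝ^n`: the cone over a properly convex open subset of
projective space.  "Proper" is expressed by the existence of a linear form positive on the
closure of the cone away from the origin (equivalently, the closure of the projectivized
convex set avoids a projective hyperplane). -/
def IsProperConvexCone {n : ℕ} (C : Set (Fin n → ℝ)) : Prop :=
  IsOpen C ∧ Convex ℝ C ∧ C.Nonempty ∧ (∀ c : ℝ, 0 < c → ∀ v ∈ C, c • v ∈ C) ∧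
    ∃ f : (Fin n → ℝ) →ₗ[ℝ] ℝ, ∀ v ∈ closure C, v ≠ 0 → 0 < f v

/-- The matrix `g` preserves a properly convex open subset of `P^{n-1}`, i.e. it preserves
the union `C ∪ -C` for some open proper convex cone `C` of `ℝ^n`. -/
def PreservesPCO {n : ℕ} (g : Matrix (Fin n) (Fin n) ℝ) : Prop :=
  ∃ C : Set (Fin n → ℝ), IsProperConvexCone C ∧
    (g.mulVec '' C = C ∨ g.mulVec '' C = Neg.neg '' C)

/-! Write `γ = 1 + N` with `N ^ r ≠ 0 = N ^ (r + 1)`. By the binomial formula,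
`(r! / p ^ r) • γ ^ p v → N ^ r v` as `p → ∞`, and since `γ⁻¹ - 1` is `-N` times a unit
commuting with `N`, the same limit for `γ⁻¹` is `(-1) ^ r N ^ r v`. The square `γ ^ 2` preserves the
cone `C` over the convex set, so for `v ∈ C` with `N ^ r v ≠ 0` both limits lie in `closure C`.
If `r` were odd they would be opposite nonzero vectors, which a proper cone cannot contain. -/

open Filter Finset Topology Asymptotics
open scoped Nat

section Ring

variable {R : Type*} [Ring R]

theorem pow_eq_sum_choose_nsmul_sub_one_pow {x : R} {r : ℕ} (hx : (x - 1) ^ (r + 1) = 0)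
    (p : ℕ) : x ^ p = ∑ j ∈ range (r + 1), p.choose j • (x - 1) ^ j := by
  have hvanish : ∀ j ≥ min p r + 1, p.choose j • (x - 1) ^ j = 0 := fun j hj => by
    rcases le_or_gt j p with hjp | hjp
    · rw [pow_eq_zero_of_le (by omega) hx, smul_zero]
    · rw [Nat.choose_eq_zero_of_lt hjp, zero_smul]
  calc x ^ p = ((x - 1) + 1) ^ p := by rw [sub_add_cancel]
    _ = ∑ j ∈ range (p + 1), p.choose j • (x - 1) ^ j := by
      simp only [(Commute.one_right (x - 1)).add_pow, one_pow, mul_one, nsmul_eq_mul,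
        (Nat.cast_commute _ _).eq]
    _ = ∑ j ∈ range (r + 1), p.choose j • (x - 1) ^ j := by
      rw [eventually_constant_sum hvanish (n := p + 1) (by omega),
        eventually_constant_sum hvanish (n := r + 1) (by omega)]

theorem Units.val_inv_sub_one_pow (u : Rˣ) (j : ℕ) :
    ((u⁻¹ : Rˣ) - 1 : R) ^ j = (-1) ^ j * ((u : R) - 1) ^ j * ((u⁻¹ : Rˣ) : R) ^ j := by
  have hcomm : Commute (-((u : R) - 1)) ((u⁻¹ : Rˣ) : R) := by
    simp [Commute, SemiconjBy, sub_mul, mul_sub]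
  rw [show ((u⁻¹ : Rˣ) - 1 : R) = -((u : R) - 1) * ((u⁻¹ : Rˣ) : R) by simp [sub_mul],
    hcomm.mul_pow, neg_pow]

theorem Units.sub_one_pow_mul_inv_pow (u : Rˣ) {r : ℕ} (hu : ((u : R) - 1) ^ (r + 1) = 0)
    (j : ℕ) : ((u : R) - 1) ^ r * ((u⁻¹ : Rˣ) : R) ^ j = ((u : R) - 1) ^ r := by
  have hfix : ((u : R) - 1) ^ r * ((u⁻¹ : Rˣ) : R) = ((u : R) - 1) ^ r := by
    rw [Units.mul_inv_eq_iff_eq_mul]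
    calc ((u : R) - 1) ^ r = ((u : R) - 1) ^ r * ((u : R) - 1) + ((u : R) - 1) ^ r := by
          rw [← pow_succ, hu, zero_add]
      _ = ((u : R) - 1) ^ r * u := by noncomm_ring
  induction j with
  | zero => rw [pow_zero, mul_one]
  | succ j ih => rw [pow_succ, ← mul_assoc, ih, hfix]

end Ring

theorem tendsto_choose_div_pow_self (r : ℕ) :
    Tendsto (fun p : ℕ => (p.choose r : ℝ) / p ^ r) atTop (𝓝 (r ! : ℝ)⁻¹) := by
  refine ((isEquivalent_choose r).div IsEquivalent.refl).symm.tendsto_nhds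
    (tendsto_const_nhds.congr' ?_)
  filter_upwards [eventually_gt_atTop 0] with p hp
  simp only [Pi.div_apply]
  field_simp

theorem tendsto_choose_div_pow_of_lt {j r : ℕ} (hjr : j < r) :
    Tendsto (fun p : ℕ => (p.choose j : ℝ) / p ^ r) atTop (𝓝 0) :=
  ((isTheta_choose j).isBigO.trans_isLittleO ((isLittleO_pow_pow_atTop_of_lt hjr).comp_tendsto
    tendsto_natCast_atTop_atTop)).tendsto_div_nhds_zero

section Module

variable {R M : Type*} [Ring R] [AddCommGroup M] [Module R M]

theorem Module.End.frequently_pow_apply_mem {S : Module.End R M} {C : Set M} {q : ℕ}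
    (hq : 0 < q) (hS : Set.MapsTo (S ^ q) C C) {v : M} (hv : v ∈ C) :
    ∃ᶠ p in atTop, (S ^ p) v ∈ C := by
  refine frequently_atTop.2 fun a => ⟨q * a, Nat.le_mul_of_pos_left a hq, ?_⟩
  rw [pow_mul, Module.End.coe_pow]
  exact hS.iterate a hv

theorem Module.End.image_pow_two_eq {T : Module.End R M} {C : Set M}
    (hTC : T '' C = C ∨ T '' C = Neg.neg '' C) : ⇑(T ^ 2) '' C = C := by
  rw [pow_two, Module.End.mul_eq_comp, LinearMap.coe_comp, Set.image_comp]
  rcases hTC with h | h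
  · rw [h, h]
  · rw [h, Set.image_comm (map_neg T), h, Set.image_image]
    simp

end Module

theorem eq_zero_of_mem_closure_of_neg_mem_closure {E : Type*} [AddCommGroup E] [Module ℝ E]
    [TopologicalSpace E] {C : Set E} {f : E →ₗ[ℝ] ℝ} (hf : ∀ v ∈ closure C, v ≠ 0 → 0 < f v)
    {w : E} (hw : w ∈ closure C) (hw' : -w ∈ closure C) : w = 0 := by
  by_contra hne
  have hpos := hf w hw hne
  have hneg := hf (-w) hw' (neg_ne_zero.2 hne)
  rw [map_neg] at hneg
  linarith

section TopologicalVectorSpace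

variable {E : Type*} [AddCommGroup E] [Module ℝ E] [TopologicalSpace E] [ContinuousAdd E]
  [ContinuousSMul ℝ E]

theorem tendsto_sum_factorial_mul_choose_div_pow_smul (u : ℕ → E) (r : ℕ) :
    Tendsto (fun p : ℕ => ∑ j ∈ range (r + 1), (r ! * p.choose j / p ^ r : ℝ) • u j) atTop
      (𝓝 (u r)) := by
  have hcoeff : ∀ j ∈ range (r + 1), Tendsto (fun p : ℕ => (r ! * p.choose j / p ^ r : ℝ))
      atTop (𝓝 (if j = r then 1 else 0)) := by
    intro j hj
    simp_rw [mul_div_assoc]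
    rcases (Nat.lt_succ_iff.1 (mem_range.1 hj)).lt_or_eq with hjr | rfl
    · simpa [hjr.ne] using (tendsto_choose_div_pow_of_lt hjr).const_mul (r ! : ℝ)
    · simpa [(Nat.cast_pos.2 j.factorial_pos).ne'] using
        (tendsto_choose_div_pow_self j).const_mul (j ! : ℝ)
  simpa using tendsto_finsetSum _ fun j hj => (hcoeff j hj).smul_const (u j)

theorem LinearMap.exists_mem_apply_ne_zero_of_isOpen {F : Type*} [AddCommGroup F] [Module ℝ F]
    {L : E →ₗ[ℝ] F} (hL : L ≠ 0) {U : Set E} (hUo : IsOpen U) (hUne : U.Nonempty) :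
    ∃ v ∈ U, L v ≠ 0 := by
  by_contra! hzero
  have hker : LinearMap.ker L = ⊤ := Submodule.eq_top_of_nonempty_interior' _
    (hUne.mono (interior_maximal (fun v hv => hzero v hv) hUo))
  exact hL (LinearMap.ker_eq_top.1 hker)

theorem Module.End.sub_one_pow_apply_mem_closure {T : Module.End ℝ E} {r : ℕ}
    (hT : (T - 1) ^ (r + 1) = 0) {C : Set E} (hC : ∀ c : ℝ, 0 < c → ∀ v ∈ C, c • v ∈ C) {v : E}
    (hv : ∃ᶠ p in atTop, (T ^ p) v ∈ C) : ((T - 1) ^ r) v ∈ closure C := by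
  refine mem_closure_of_frequently_of_tendsto ?_
    (tendsto_sum_factorial_mul_choose_div_pow_smul (fun j => ((T - 1) ^ j) v) r)
  refine (hv.and_eventually (eventually_gt_atTop 0)).mono fun p ⟨hpC, hp⟩ => ?_
  convert hC ((r ! : ℝ) / p ^ r) (by positivity) _ hpC using 1
  rw [pow_eq_sum_choose_nsmul_sub_one_pow hT p, LinearMap.sum_apply, Finset.smul_sum]
  refine Finset.sum_congr rfl fun j _ => ?_
  rw [LinearMap.smul_apply, ← Nat.cast_smul_eq_nsmul ℝ, smul_smul, mul_div_right_comm]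

theorem Module.End.sub_one_pow_eq_zero_of_odd {T : Module.End ℝ E} {r : ℕ}
    (hT : (T - 1) ^ (r + 1) = 0) (hr : Odd r) {C : Set E} (hCo : IsOpen C) (hCne : C.Nonempty)
    (hC : ∀ c : ℝ, 0 < c → ∀ v ∈ C, c • v ∈ C) {f : E →ₗ[ℝ] ℝ}
    (hf : ∀ v ∈ closure C, v ≠ 0 → 0 < f v) (hTC : ⇑(T ^ 2) '' C = C) : (T - 1) ^ r = 0 := by
  by_contra hne
  obtain ⟨v, hvC, hv⟩ := LinearMap.exists_mem_apply_ne_zero_of_isOpen hne hCo hCne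
  obtain ⟨u, rfl⟩ : IsUnit T := by simpa using IsNilpotent.isUnit_add_one ⟨r + 1, hT⟩
  set S : Module.End ℝ E := ((u⁻¹ : (Module.End ℝ E)ˣ) : Module.End ℝ E)
  have hS : (S - 1) ^ (r + 1) = 0 := by simp [S, Units.val_inv_sub_one_pow, hT]
  have hSr : (S - 1) ^ r = -((u : Module.End ℝ E) - 1) ^ r := by
    rw [Units.val_inv_sub_one_pow, mul_assoc, Units.sub_one_pow_mul_inv_pow u hT, hr.neg_one_pow,
      neg_one_mul]
  have hSC : Set.MapsTo ⇑(S ^ 2) C C := by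
    rintro _ hx
    obtain ⟨y, hy, rfl⟩ := hTC.symm ▸ hx
    rwa [← Module.End.mul_apply, ← Units.val_pow_eq_pow_val, ← Units.val_pow_eq_pow_val,
      ← Units.val_mul, inv_pow, inv_mul_cancel, Units.val_one, Module.End.one_apply]
  have hfwd := Module.End.sub_one_pow_apply_mem_closure hT hC
    (Module.End.frequently_pow_apply_mem two_pos ((Set.mapsTo_image _ C).mono_right hTC.subset) hvC)
  have hbwd := Module.End.sub_one_pow_apply_mem_closure hS hC
    (Module.End.frequently_pow_apply_mem two_pos hSC hvC)
  rw [hSr, LinearMap.neg_apply] at hbwd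
  exact hv (eq_zero_of_mem_closure_of_neg_mem_closure hf hfwd hbwd)

end TopologicalVectorSpace

theorem odd_degree_of_unipotent_preserving_convex_general (n : ℕ)
    (γ : Matrix (Fin (n+1)) (Fin (n+1)) ℝ) (hpres : PreservesPCO γ)
    (k : ℕ) (hk : IsLeast {j : ℕ | (γ - 1) ^ j = 0} k) : Odd k := by
  obtain ⟨C, ⟨hCo, -, hCne, hC, f, hf⟩, hγC⟩ := hpres
  obtain ⟨r, rfl⟩ : ∃ r, k = r + 1 :=
    Nat.exists_eq_add_one.2 (Nat.pos_of_ne_zero (by rintro rfl; simpa using hk.1))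
  set T := Matrix.toLinAlgEquiv' γ
  have hT : ∀ j, (T - 1) ^ j = Matrix.toLinAlgEquiv' ((γ - 1) ^ j) := by simp [T]
  by_contra hodd
  have hr : Odd r := by simpa [Nat.odd_add_one] using hodd
  have hγr : (γ - 1) ^ r = 0 := by
    refine Matrix.toLinAlgEquiv'.injective ?_
    rw [map_zero, ← hT]
    exact Module.End.sub_one_pow_eq_zero_of_odd (by rw [hT, hk.1, map_zero]) hr hCo hCne hC hf
      (Module.End.image_pow_two_eq hγC)
  exact absurd (hk.2 hγr) (by omega)

/-- A unipotent element of `SL_{n+1}(ℝ)` preserving a properly convex open subset of `P^n`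
has odd degree, the degree being the least `k` with `(γ - 1)^k = 0`. -/
theorem odd_degree_of_unipotent_preserving_convex (n : ℕ)
    (γ : Matrix (Fin (n+1)) (Fin (n+1)) ℝ) (hdet : γ.det = 1)
    (hunip : (γ - 1) ^ (n+1) = 0) (hpres : PreservesPCO γ)
    (k : ℕ) (hk : IsLeast {j : ℕ | (γ - 1) ^ j = 0} k) : Odd k :=
  odd_degree_of_unipotent_preserving_convex_general n γ hpres k hk
end

section
/- For every n ≥ 1 and r > 0, there exists a constant v_n(r) > 0 such that for every properly convex open subset Ω of P^n and every x ∈ Ω, the Busemann volume of the Hilbert-metric ball of radius r centered at x satisfies Vol_Ω(B_Ω(x,r)) ≥ v_n(r). -/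
open Set Filter MeasureTheory

/-- The Busemann density of the Hilbert geometry of `S`:
`dVol_S(x) = v_n / Vol(B(T_xS)) dVol(x)`. -/
noncomputable def busemannDensity {n : ℕ} (S : Set (EuclideanSpace ℝ (Fin n)))
    (x : EuclideanSpace ℝ (Fin n)) : ENNReal :=
  volume (Metric.ball (0 : EuclideanSpace ℝ (Fin n)) 1) / volume (finslerBall S x)

/-- The Busemann volume of `A` in the Hilbert geometry of `S`. -/
noncomputable def busemannVolume {n : ℕ} (S A : Set (EuclideanSpace ℝ (Fin n))) : ENNReal :=
  ∫⁻ x in A, busemannDensity S x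

/-! Let `C = (Ω - x) ∩ (x - Ω)`, the largest subset of `Ω - x` that is symmetric about `0`.
For `u ∈ C` the Hilbert distance from `x` to `x + εu` is at most `-log (1 - 2ε) / 2`, so for small
`ε` the ball `B_Ω(x, r)` contains `x + εC`. Moving the base point from `x` to `x + εu` shrinks
`Ω - x` by at most the factor `1 + ε`, so the Finsler unit ball at `x + εu` lies in `2(1 + ε)C` and
the Busemann density there is at least `v_n / ((2(1 + ε))ⁿ Vol C)`. Integrating over `x + εC`, of
volume `εⁿ Vol C`, the unknown `Vol C` cancels and leaves `v_n (ε / (2(1 + ε)))ⁿ`. -/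

open Pointwise Topology

def symmetricCore {E : Type*} [AddCommGroup E] (S : Set E) (x : E) : Set E :=
  {u | x + u ∈ S ∧ x - u ∈ S}

section AddCommGroup

variable {E : Type*} [AddCommGroup E] {S : Set E} {x : E}

theorem image_sub_const_eq_preimage_add (S : Set E) (x : E) :
    (fun z => z - x) '' S = (x + ·) ⁻¹' S := by
  ext w
  constructor
  · rintro ⟨z, hz, rfl⟩
    simpa using hz
  · exact fun h => ⟨x + w, h, by simp⟩

theorem mem_image_sub_const_iff {w : E} :
    w ∈ (fun z => z - x) '' S ↔ x + w ∈ S := by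
  rw [image_sub_const_eq_preimage_add]
  rfl

theorem zero_mem_symmetricCore (hx : x ∈ S) : 0 ∈ symmetricCore S x :=
  ⟨by simpa using hx, by simpa using hx⟩

end AddCommGroup

section Topology

variable {G : Type*} [AddCommGroup G] [TopologicalSpace G] [IsTopologicalAddGroup G] {S : Set G}

theorem image_sub_const_mem_nhds_zero (hS : IsOpen S) {x : G} (hx : x ∈ S) :
    (fun z => z - x) '' S ∈ 𝓝 0 := by
  rw [image_sub_const_eq_preimage_add]
  exact (hS.preimage (continuous_const_add x)).mem_nhds (by simpa using hx)

theorem isOpen_symmetricCore (hS : IsOpen S) (x : G) : IsOpen (symmetricCore S x) :=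
  (hS.preimage (continuous_const_add x)).inter (hS.preimage (continuous_const.sub continuous_id))

end Topology

theorem isBounded_symmetricCore {E : Type*} [SeminormedAddCommGroup E] {S : Set E}
    (hS : Bornology.IsBounded S) (x : E) : Bornology.IsBounded (symmetricCore S x) :=
  (hS.vadd (-x)).subset fun u hu => ⟨x + u, hu.1, by simp⟩

section Funk

variable {E : Type*} [AddCommGroup E] [Module ℝ E] {S : Set E}

theorem funkDist_le_of_add_smul_mem {a b : E} {s : ℝ} (hs : 1 < s) (h : a + s • (b - a) ∈ S) :
    funkDist S a b ≤ -Real.log (1 - s⁻¹) := by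
  have hs0 : 0 < s := one_pos.trans hs
  have hgauge : gauge ((fun z => z - a) '' S) (b - a) ≤ s⁻¹ :=
    gauge_le_of_mem (inv_nonneg.2 hs0.le)
      ⟨s • (b - a), mem_image_sub_const_iff.2 h, inv_smul_smul₀ hs0.ne' _⟩
  have hpos : 0 < 1 - s⁻¹ := sub_pos.2 (inv_lt_one_of_one_lt₀ hs)
  exact neg_le_neg (Real.log_le_log hpos (by linarith))

theorem hilbertDist_add_smul_le (hS : Convex ℝ S) {x u : E} (hu : u ∈ symmetricCore S x)
    {ε : ℝ} (hε0 : 0 < ε) (hε : ε < 1 / 2) :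
    hilbertDist S x (x + ε • u) ≤ -Real.log (1 - 2 * ε) / 2 := by
  have hε1 : 0 < 1 - ε := by linarith
  have hforward : funkDist S x (x + ε • u) ≤ -Real.log (1 - ε) := by
    have h := funkDist_le_of_add_smul_mem (S := S) (a := x) (b := x + ε • u)
      ((one_lt_inv₀ hε0).2 (by linarith)) (by simpa [smul_smul, hε0.ne'] using hu.1)
    rwa [inv_inv] at h
  have hbackward : funkDist S (x + ε • u) x ≤ -Real.log ((1 - 2 * ε) / (1 - ε)) := by
    have hmem : (1 - ε) • (x - u) + ε • (x + u) ∈ S :=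
      hS hu.2 hu.1 hε1.le hε0.le (by ring)
    have h := funkDist_le_of_add_smul_mem (S := S) (a := x + ε • u) (b := x)
      (s := (1 - ε) / ε) ((one_lt_div hε0).2 (by linarith)) (by
        convert hmem using 1
        rw [show x - (x + ε • u) = ε • -u by module, smul_smul, div_mul_cancel₀ _ hε0.ne']
        module)
    convert h using 3
    field_simp
    ring
  have hlog : Real.log (1 - ε) + Real.log ((1 - 2 * ε) / (1 - ε)) = Real.log (1 - 2 * ε) := by
    rw [← Real.log_mul hε1.ne' (div_pos (by linarith) hε1).ne', mul_div_cancel₀ _ hε1.ne']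
  unfold hilbertDist
  linarith

end Funk

section Finsler

variable {E : Type*} [NormedAddCommGroup E] [NormedSpace ℝ E] {S : Set E} {x u : E} {t : ℝ}

theorem image_sub_add_smul_subset (hS : Convex ℝ S) (hxu : x - u ∈ S) (ht : 0 ≤ t) :
    (fun z => z - (x + t • u)) '' S ⊆ (1 + t) • (fun z => z - x) '' S := by
  intro v hv
  have ht1 : 0 < 1 + t := by linarith
  refine (mem_smul_set_iff_inv_smul_mem₀ ht1.ne' _ _).2 (mem_image_sub_const_iff.2 ?_)
  -- `x + (1 + t)⁻¹ • v` is the convex combination of `x + t • u + v` and `x - u`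
  -- with weights `1 / (1 + t)` and `t / (1 + t)`.
  convert hS (mem_image_sub_const_iff.1 hv) hxu (inv_nonneg.2 ht1.le)
    (by positivity : 0 ≤ t / (1 + t)) (by field_simp) using 1
  match_scalars
  · field_simp
  · field_simp
  · field_simp
    ring

theorem finslerBall_add_smul_subset (hSo : IsOpen S) (hS : Convex ℝ S) (hy : x + t • u ∈ S)
    (hxu : x - u ∈ S) (ht : 0 ≤ t) :
    finslerBall S (x + t • u) ⊆ (1 + t) • finslerBall S x := by
  have ht1 : 0 < 1 + t := by linarith
  have hgauge : ∀ v, (1 + t)⁻¹ * gauge ((fun z => z - x) '' S) v ≤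
      gauge ((fun z => z - (x + t • u)) '' S) v := fun v => by
    rw [← smul_eq_mul, ← Pi.smul_apply, ← gauge_smul_left_of_nonneg ht1.le]
    exact gauge_mono (absorbent_nhds_zero (image_sub_const_mem_nhds_zero hSo hy))
      (image_sub_add_smul_subset hS hxu ht) v
  intro v hv
  refine (mem_smul_set_iff_inv_smul_mem₀ ht1.ne' _ _).2 ?_
  simp only [finslerBall, mem_ofPred_eq, ← smul_neg,
    gauge_smul_of_nonneg (inv_nonneg.2 ht1.le), smul_eq_mul] at hv ⊢
  linarith [hgauge v, hgauge (-v)]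

theorem finslerBall_subset_two_smul_symmetricCore (hSo : IsOpen S) (hS : Convex ℝ S)
    (hx : x ∈ S) :
    finslerBall S x ⊆ (2 : ℝ) • symmetricCore S x := by
  have hmem : ∀ w, gauge ((fun z => z - x) '' S) w < 2 → x + (2 : ℝ)⁻¹ • w ∈ S := by
    intro w hw
    have hconv : Convex ℝ ((fun z => z - x) '' S) := by
      rw [image_sub_const_eq_preimage_add]
      exact hS.translate_preimage_right x
    refine mem_image_sub_const_iff.1 (interior_subset ((gauge_lt_one_iff_mem_interior hconv
      (image_sub_const_mem_nhds_zero hSo hx)).1 ?_))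
    rw [gauge_smul_of_nonneg (by norm_num), smul_eq_mul]
    linarith
  intro v hv
  have hgv := gauge_nonneg (s := (fun z => z - x) '' S) v
  have hgnv := gauge_nonneg (s := (fun z => z - x) '' S) (-v)
  simp only [finslerBall, mem_ofPred_eq] at hv
  refine (mem_smul_set_iff_inv_smul_mem₀ two_ne_zero _ _).2 ⟨hmem v (by linarith), ?_⟩
  simpa [sub_eq_add_neg, smul_neg] using hmem (-v) (by linarith)

end Finsler

section Volume

variable {n : ℕ} {Ω : Set (EuclideanSpace ℝ (Fin n))} {x : EuclideanSpace ℝ (Fin n)} {t : ℝ}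

theorem div_volume_smul_symmetricCore_le_busemannDensity (hΩ : IsProperlyConvex Ω) (hx : x ∈ Ω)
    {u : EuclideanSpace ℝ (Fin n)} (hu : u ∈ symmetricCore Ω x) (ht0 : 0 ≤ t) (ht1 : t ≤ 1) :
    volume (Metric.ball (0 : EuclideanSpace ℝ (Fin n)) 1) /
        volume ((2 * (1 + t)) • symmetricCore Ω x) ≤ busemannDensity Ω (x + t • u) := by
  have hy : x + t • u ∈ Ω := hΩ.2.1.add_smul_mem hx hu.1 ⟨ht0, ht1⟩
  have hsub : finslerBall Ω (x + t • u) ⊆ (2 * (1 + t)) • symmetricCore Ω x := by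
    rw [mul_comm, ← smul_smul]
    exact (finslerBall_add_smul_subset hΩ.1 hΩ.2.1 hy hu.2 ht0).trans
      (smul_set_mono (finslerBall_subset_two_smul_symmetricCore hΩ.1 hΩ.2.1 hx))
  exact ENNReal.div_le_div_left (measure_mono hsub) _

theorem le_busemannVolume_of_vadd_smul_subset (hΩ : IsProperlyConvex Ω) (hx : x ∈ Ω)
    (ht0 : 0 < t) (ht1 : t ≤ 1) {A : Set (EuclideanSpace ℝ (Fin n))}
    (hA : x +ᵥ t • symmetricCore Ω x ⊆ A) :
    ENNReal.ofReal ((t / (2 * (1 + t))) ^ n) *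
      volume (Metric.ball (0 : EuclideanSpace ℝ (Fin n)) 1) ≤ busemannVolume Ω A := by
  set vb := volume (Metric.ball (0 : EuclideanSpace ℝ (Fin n)) 1)
  set C := symmetricCore Ω x
  set K : ℝ := 2 * (1 + t)
  have hK : 0 < K := by positivity
  have hCopen : IsOpen C := isOpen_symmetricCore hΩ.1 x
  have hKC0 : volume (K • C) ≠ 0 := ((hCopen.smul₀ hK.ne').measure_pos volume
    ⟨0, zero_mem_smul_set (zero_mem_symmetricCore hx)⟩).ne'
  have hKCtop : volume (K • C) ≠ ⊤ :=
    ((isBounded_symmetricCore hΩ.2.2.1 x).smul₀ K).measure_lt_top.ne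
  have hvol : volume (x +ᵥ t • C) = ENNReal.ofReal ((t / K) ^ n) * volume (K • C) := by
    rw [measure_vadd, show t • C = (t / K) • K • C by rw [smul_smul, div_mul_cancel₀ _ hK.ne'],
      Measure.addHaar_smul_of_nonneg volume (by positivity), finrank_euclideanSpace_fin]
  calc ENNReal.ofReal ((t / K) ^ n) * vb = vb / volume (K • C) * volume (x +ᵥ t • C) := by
        rw [hvol, mul_left_comm, ENNReal.div_mul_cancel hKC0 hKCtop, mul_comm]
    _ = ∫⁻ _ in x +ᵥ t • C, vb / volume (K • C) := (setLIntegral_const _ _).symm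
    _ ≤ ∫⁻ y in x +ᵥ t • C, busemannDensity Ω y := by
        refine setLIntegral_mono' ((hCopen.smul₀ ht0.ne').vadd x).measurableSet ?_
        rintro _ ⟨_, ⟨u, hu, rfl⟩, rfl⟩
        exact div_volume_smul_symmetricCore_le_busemannDensity hΩ hx hu ht0.le ht1
    _ ≤ busemannVolume Ω A := lintegral_mono_set hA

end Volume

theorem exists_uniform_lower_bound_volume_ball_general (n : ℕ) (r : ℝ) (hr : 0 < r) :
    ∃ v : ℝ, 0 < v ∧ ∀ Ω : Set (EuclideanSpace ℝ (Fin n)), IsProperlyConvex Ω →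
      ∀ x ∈ Ω, ENNReal.ofReal v ≤ busemannVolume Ω (hilbertBall Ω x r) := by
  set ε := (1 - Real.exp (-(2 * r))) / 4 with hε_def
  have hexp : Real.exp (-(2 * r)) < 1 := Real.exp_lt_one_iff.2 (by linarith)
  have hε0 : 0 < ε := by linarith
  have hε : ε < 1 / 2 := by linarith [Real.exp_pos (-(2 * r))]
  have hεr : -Real.log (1 - 2 * ε) / 2 < r := by
    have : -(2 * r) < Real.log (1 - 2 * ε) :=
      (Real.lt_log_iff_exp_lt (by linarith)).2 (by linarith)
    linarith
  set vb := volume (Metric.ball (0 : EuclideanSpace ℝ (Fin n)) 1)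
  have hvb : 0 < vb.toReal :=
    ENNReal.toReal_pos (Metric.measure_ball_pos volume _ one_pos).ne' measure_ball_lt_top.ne
  refine ⟨(ε / (2 * (1 + ε))) ^ n * vb.toReal, by positivity, fun Ω hΩ x hx => ?_⟩
  rw [ENNReal.ofReal_mul (by positivity), ENNReal.ofReal_toReal measure_ball_lt_top.ne]
  refine le_busemannVolume_of_vadd_smul_subset hΩ hx hε0 (by linarith) ?_
  rintro _ ⟨_, ⟨u, hu, rfl⟩, rfl⟩
  exact ⟨hΩ.2.1.add_smul_mem hx hu.1 ⟨hε0.le, by linarith⟩,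
    (hilbertDist_add_smul_le hΩ.2.1 hu hε0 hε).trans_lt hεr⟩

/-- (Colbois–Vernicos) For every `n ≥ 1` and `r > 0` there is `v_n(r) > 0` such that every
metric ball of radius `r` in every properly convex open `Ω ⊆ P^n` has Busemann volume
at least `v_n(r)`. -/
theorem exists_uniform_lower_bound_volume_ball (n : ℕ) (hn : 1 ≤ n) (r : ℝ) (hr : 0 < r) :
    ∃ v : ℝ, 0 < v ∧ ∀ Ω : Set (EuclideanSpace ℝ (Fin n)), IsProperlyConvex Ω →
      ∀ x ∈ Ω, ENNReal.ofReal v ≤ busemannVolume Ω (hilbertBall Ω x r) :=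
  exists_uniform_lower_bound_volume_ball_general n r hr
end

section
/- Let Ω be a properly convex open subset of R^n with coordinate directions e_1,…,e_n, and for x ∈ Ω let Ω_i(x) = Ω ∩ (x + R·e_i). Then the unit ball B(T_xΩ) of the Hilbert–Finsler norm at x contains the convex hull of the points ∂B(T_xΩ) ∩ R_±·e_i; consequently there is a constant K_n > 0, depending only on n, with Vol(B(T_xΩ)) ≥ K_n · ∏_{i=1}^n Vol_i(B(T_xΩ_i(x))), where Vol_i is 1-dimensional Lebesgue measure on R·e_i. -/
open Set Filter MeasureTheory

/-- The Finsler norm `F(x,v) = (|v|/2)(1/|xx⁻| + 1/|xx⁺|)` of the Hilbert metric of `S`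
at `x`, expressed through the Minkowski gauge. -/
noncomputable def finslerNorm {E : Type*} [AddCommGroup E] [Module ℝ E]
    (S : Set E) (x v : E) : ℝ :=
  (gauge ((fun z => z - x) '' S) v + gauge ((fun z => z - x) '' S) (-v)) / 2

/-!
The Finsler norm at `x` is the symmetrized gauge `v ↦ (g(v) + g(-v))/2` of the convex
neighbourhood `Ω - x` of `0`, hence a seminorm, which is positive on `v ≠ 0` because `Ω` is
bounded. Each point `F(±eᵢ)⁻¹ • (±eᵢ)` has norm `1`, so their convex hull lies in the closed unit
ball, the closure of the open one. With `aᵢ = F(eᵢ)⁻¹` the slice ball in direction `eᵢ` is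
`(-aᵢ, aᵢ)`, and by the triangle inequality the box `∏ᵢ (-aᵢ/(n+1), aᵢ/(n+1))` lies in the unit
ball, which gives `K_n = (n+1)⁻ⁿ`.
-/

open Topology Pointwise

section GaugeSymmSeminorm

variable {E : Type*} [AddCommGroup E] [Module ℝ E] {s : Set E}

noncomputable def gaugeSymmSeminorm (hs : Convex ℝ s) (hs₀ : Absorbent ℝ s) : Seminorm ℝ E :=
  Seminorm.of (fun v => (gauge s v + gauge s (-v)) / 2)
    (fun u v => by
      have := gauge_add_le hs hs₀ u v
      have := gauge_add_le hs hs₀ (-u) (-v)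
      rw [neg_add]
      linarith)
    (fun c v => by
      rcases le_or_gt 0 c with hc | hc
      · rw [← smul_neg, gauge_smul_of_nonneg hc, gauge_smul_of_nonneg hc, Real.norm_of_nonneg hc,
          smul_eq_mul, smul_eq_mul]
        ring
      · rw [← neg_smul, show c • v = (-c) • -v by simp, gauge_smul_of_nonneg (by linarith),
          gauge_smul_of_nonneg (by linarith), Real.norm_of_nonpos hc.le, smul_eq_mul, smul_eq_mul]
        ring)

variable (hs : Convex ℝ s) (hs₀ : Absorbent ℝ s)

theorem gaugeSymmSeminorm_apply (v : E) :
    gaugeSymmSeminorm hs hs₀ v = (gauge s v + gauge s (-v)) / 2 :=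
  rfl

theorem gaugeSymmSeminorm_pos [TopologicalSpace E] [T1Space E] (hb : Bornology.IsVonNBounded ℝ s)
    {v : E} (hv : v ≠ 0) : 0 < gaugeSymmSeminorm hs hs₀ v := by
  rw [gaugeSymmSeminorm_apply]
  have := (gauge_pos hs₀ hb).2 hv
  have := gauge_nonneg (s := s) (-v)
  positivity

end GaugeSymmSeminorm

theorem EuclideanSpace.volume_setOf_forall_mem {ι : Type*} [Fintype ι] (s : ι → Set ℝ) :
    volume {v : EuclideanSpace ℝ ι | ∀ i, v i ∈ s i} = ∏ i, volume (s i) := by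
  rw [← volume_pi_pi]
  convert (EuclideanSpace.volume_preserving_symm_measurableEquiv_toLp ι).measure_preimage_equiv _
  ext v
  simp

namespace Seminorm

section General

variable {E : Type*} [AddCommGroup E] [Module ℝ E] (p : Seminorm ℝ E)

theorem inv_smul_mem_closedBall (v : E) : (p v)⁻¹ • v ∈ p.closedBall 0 1 := by
  rw [mem_closedBall_zero, map_smul_eq_mul, Real.norm_of_nonneg (inv_nonneg.2 (apply_nonneg p v))]
  exact inv_mul_le_one

theorem closedBall_zero_subset_closure_ball [TopologicalSpace E] [ContinuousSMul ℝ E] {r : ℝ}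
    (hr : 0 < r) : p.closedBall 0 r ⊆ closure (p.ball 0 r) := by
  intro v hv
  rw [mem_closedBall_zero] at hv
  have hlim : Tendsto (fun t : ℝ => t • v) (𝓝[<] 1) (𝓝 v) := by
    simpa using (tendsto_nhdsWithin_of_tendsto_nhds (tendsto_id (x := 𝓝 (1 : ℝ)))).smul_const v
  refine mem_closure_of_tendsto hlim ?_
  filter_upwards [Ioo_mem_nhdsLT one_pos] with t ht
  rw [mem_ball_zero, map_smul_eq_mul, Real.norm_of_nonneg ht.1.le]
  calc t * p v ≤ t * r := mul_le_mul_of_nonneg_left hv ht.1.le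
    _ < r := (mul_lt_iff_lt_one_left hr).2 ht.2

theorem setOf_smul_lt_one_eq_Ioo {v : E} (hv : 0 < p v) :
    {t : ℝ | p (t • v) < 1} = Ioo (-(p v)⁻¹) (p v)⁻¹ := by
  ext t
  rw [mem_ofPred_eq, map_smul_eq_mul, Real.norm_eq_abs, mem_Ioo, ← abs_lt, ← one_div,
    lt_div_iff₀ hv]

end General

section Euclidean

variable {ι : Type*} [Fintype ι] [DecidableEq ι] (p : Seminorm ℝ (EuclideanSpace ℝ ι))

theorem setOf_forall_mem_Ioo_subset_ball {r : ι → ℝ}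
    (hr : ∑ i, r i * p (EuclideanSpace.single i 1) < 1) :
    {v : EuclideanSpace ℝ ι | ∀ i, v i ∈ Ioo (-r i) (r i)} ⊆ p.ball 0 1 := by
  intro v hv
  rw [mem_ball_zero]
  calc p v = p (∑ i, v i • EuclideanSpace.single i 1) := by
        simpa using congrArg p ((EuclideanSpace.basisFun ι ℝ).sum_repr v).symm
    _ ≤ ∑ i, p (v i • EuclideanSpace.single i 1) :=
        Finset.le_sum_of_subadditive p (map_zero p).le (map_add_le_add p) _ _
    _ = ∑ i, |v i| * p (EuclideanSpace.single i 1) := by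
        simp only [map_smul_eq_mul, Real.norm_eq_abs]
    _ ≤ ∑ i, r i * p (EuclideanSpace.single i 1) :=
        Finset.sum_le_sum fun i _ => by gcongr; exact (abs_lt.2 (hv i)).le
    _ < 1 := hr

theorem prod_volume_slices_le_volume_ball (hp : ∀ i, 0 < p (EuclideanSpace.single i 1)) :
    ENNReal.ofReal (((Fintype.card ι : ℝ) + 1)⁻¹ ^ Fintype.card ι *
        ∏ i, (volume {t : ℝ | p (t • EuclideanSpace.single i 1) < 1}).toReal) ≤
      volume (p.ball 0 1) := by
  set c : ℝ := ((Fintype.card ι : ℝ) + 1)⁻¹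
  set r : ι → ℝ := fun i => c * (p (EuclideanSpace.single i 1))⁻¹
  have hr : ∀ i, 0 ≤ r i := fun i => by positivity
  have hbox : ∑ i, r i * p (EuclideanSpace.single i 1) < 1 :=
    calc ∑ i, r i * p (EuclideanSpace.single i 1) = ∑ _i : ι, c :=
          Finset.sum_congr rfl fun i _ => inv_mul_cancel_right₀ (hp i).ne' c
      _ = Fintype.card ι / (Fintype.card ι + 1) := by
          rw [Finset.sum_const, Finset.card_univ, nsmul_eq_mul, div_eq_mul_inv]
      _ < 1 := by
          rw [div_lt_one (by positivity)]
          linarith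
  calc ENNReal.ofReal (c ^ Fintype.card ι *
          ∏ i, (volume {t : ℝ | p (t • EuclideanSpace.single i 1) < 1}).toReal)
      = ENNReal.ofReal (∏ i, 2 * r i) := by
        congr 1
        rw [← Finset.card_univ, ← Finset.prod_const, ← Finset.prod_mul_distrib]
        refine Finset.prod_congr rfl fun i _ => ?_
        rw [setOf_smul_lt_one_eq_Ioo p (hp i), Real.volume_Ioo,
          ENNReal.toReal_ofReal (by linarith [inv_pos.2 (hp i)])]
        ring
    _ = ∏ i, volume (Ioo (-r i) (r i)) := by
        rw [ENNReal.ofReal_prod_of_nonneg fun i _ => by have := hr i; positivity]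
        refine Finset.prod_congr rfl fun i _ => ?_
        rw [Real.volume_Ioo]
        ring_nf
    _ = volume {v : EuclideanSpace ℝ ι | ∀ i, v i ∈ Ioo (-r i) (r i)} :=
        (EuclideanSpace.volume_setOf_forall_mem _).symm
    _ ≤ volume (p.ball 0 1) := measure_mono (p.setOf_forall_mem_Ioo_subset_ball hbox)

end Euclidean

end Seminorm

theorem IsProperlyConvex.image_sub_const {E : Type*} [NormedAddCommGroup E] [NormedSpace ℝ E]
    {S : Set E} (hS : IsProperlyConvex S) (x : E) :
    IsProperlyConvex ((· - x) '' S) := by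
  obtain ⟨hopen, hconv, hbdd, hne⟩ := hS
  rw [← sub_singleton]
  exact ⟨hopen.sub_right, hconv.sub (convex_singleton x),
    hbdd.sub Bornology.isBounded_singleton, hne.sub (singleton_nonempty x)⟩

theorem finslerBall_eq_ball {E : Type*} [AddCommGroup E] [Module ℝ E] {S : Set E} {x : E}
    (hs : Convex ℝ ((· - x) '' S)) (hs₀ : Absorbent ℝ ((· - x) '' S)) :
    finslerBall S x = (gaugeSymmSeminorm hs hs₀).ball 0 1 := by
  ext v
  rw [Seminorm.mem_ball_zero, gaugeSymmSeminorm_apply, div_lt_one two_pos]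
  rfl

/-- The Finsler unit ball of a properly convex open `Ω ⊆ ℝ^n` at `x` contains the convex hull
of its boundary points in the coordinate directions `±e_i`; consequently there is a constant
`K_n > 0`, depending only on `n`, with
`Vol(B(T_xΩ)) ≥ K_n · ∏_i Vol_i(B(T_xΩ_i(x)))`, where `Ω_i(x) = Ω ∩ (x + ℝ·e_i)`. -/
theorem finslerBall_volume_ge_prod_slices (n : ℕ) :
    ∃ K : ℝ, 0 < K ∧ ∀ Ω : Set (EuclideanSpace ℝ (Fin n)), IsProperlyConvex Ω → ∀ x ∈ Ω,
      (convexHull ℝ (⋃ i : Fin n,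
          ({(finslerNorm Ω x (EuclideanSpace.single i (1:ℝ)))⁻¹ • EuclideanSpace.single i (1:ℝ),
            (finslerNorm Ω x (-(EuclideanSpace.single i (1:ℝ))))⁻¹ •
              (-(EuclideanSpace.single i (1:ℝ)))} : Set (EuclideanSpace ℝ (Fin n))))
        ⊆ closure (finslerBall Ω x)) ∧
      ENNReal.ofReal (K * ∏ i : Fin n,
          (volume {t : ℝ | finslerNorm Ω x (t • EuclideanSpace.single i (1:ℝ)) < 1}).toReal)
        ≤ volume (finslerBall Ω x) := by
  refine ⟨((n : ℝ) + 1)⁻¹ ^ n, by positivity, fun Ω hΩ x hx => ?_⟩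
  obtain ⟨hopen, hconv, hbdd, -⟩ := hΩ.image_sub_const x
  have hs₀ : Absorbent ℝ ((· - x) '' Ω) :=
    absorbent_nhds_zero (hopen.mem_nhds ⟨x, hx, sub_self x⟩)
  set p := gaugeSymmSeminorm hconv hs₀
  have hp : finslerNorm Ω x = p := rfl
  rw [hp, finslerBall_eq_ball hconv hs₀]
  refine ⟨?_, ?_⟩
  · refine (convexHull_min ?_ (p.convex_closedBall 0 1)).trans
      (p.closedBall_zero_subset_closure_ball one_pos)
    simp only [iUnion_subset_iff, insert_subset_iff, singleton_subset_iff]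
    exact fun i => ⟨p.inv_smul_mem_closedBall _, p.inv_smul_mem_closedBall _⟩
  · have hpos (i : Fin n) : 0 < p (EuclideanSpace.single i 1) :=
      gaugeSymmSeminorm_pos hconv hs₀ ((NormedSpace.isVonNBounded_iff ℝ).2 hbdd) (by simp)
    simpa using p.prod_volume_slices_le_volume_ball hpos
end
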